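/- With the fiber kernel construction, the pushforward of the mixture measure μ under the coordinatewise map π = (…, F⁻¹, F⁻¹, …) equals ν: π_*μ = ν. -/

import Mathlib

/-!
Each `κ ω` is a probability measure carried by the fibre `π⁻¹{ω}`, so its pushforward under `π`
is `δ_ω`, and hence `π_*(ν.bind κ) = ν.bind δ = ν`. The only analytic input is the measurability
of `π`, i.e. of the generalized inverse `F⁻¹`: it is monotone on `(0, 1)` and, by the `sInf`
conventions, equal to `0` off `(0, 1]`.
-/

open MeasureTheory Set ProbabilityTheory

theorem MonotoneOn.measurable_of_eqOn_compl {α β : Type*}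
    [TopologicalSpace α] [MeasurableSpace α] [BorelSpace α] [LinearOrder α]
    [OrderClosedTopology α] [TopologicalSpace β] [MeasurableSpace β] [BorelSpace β] [LinearOrder β]
    [OrderTopology β] [SecondCountableTopology β] {f g : α → β} {s : Set α}
    (hs : MeasurableSet s) (hf : MonotoneOn f s) (hg : Measurable g) (hfg : EqOn f g sᶜ) :
    Measurable f := by
  refine measurable_of_restrict_of_restrict_compl hs ?_ ?_
  · exact Monotone.measurable fun x y hxy => hf x.2 y.2 hxy
  · convert hg.comp measurable_subtype_coe using 1
    exact funext fun x => hfg x.2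

namespace ProbabilityTheory

/-- `sInf` of an empty or unbounded-below set of reals is `0`, so `quantile μ` vanishes outside
`(0, 1]`. -/
noncomputable def quantile (μ : Measure ℝ) (s : ℝ) : ℝ := sInf {t | s ≤ cdf μ t}

variable (μ : Measure ℝ)

lemma quantile_of_nonpos {s : ℝ} (hs : s ≤ 0) : quantile μ s = 0 := by
  have : {t | s ≤ cdf μ t} = univ := eq_univ_of_forall fun t => hs.trans (cdf_nonneg μ t)
  rw [quantile, this, Real.sInf_univ]

lemma quantile_of_one_lt {s : ℝ} (hs : 1 < s) : quantile μ s = 0 := by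
  have : {t | s ≤ cdf μ t} = ∅ := eq_empty_of_forall_notMem fun t ht =>
    (cdf_le_one μ t).not_gt (hs.trans_le ht)
  rw [quantile, this, Real.sInf_empty]

lemma monotoneOn_quantile : MonotoneOn (quantile μ) (Ioo 0 1) := by
  intro s hs s' hs' hss'
  have hbdd : BddBelow {t | s ≤ cdf μ t} := by
    obtain ⟨t₀, ht₀⟩ := ((tendsto_cdf_atBot μ).eventually (eventually_lt_nhds hs.1)).exists
    exact ⟨t₀, fun t ht => le_of_not_gt fun htt₀ =>
      (ht₀.trans_le' (ht.out.trans (monotone_cdf μ htt₀.le))).false⟩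
  have hne : {t | s' ≤ cdf μ t}.Nonempty :=
    ((tendsto_cdf_atTop μ).eventually (eventually_ge_nhds hs'.2)).exists
  exact csInf_le_csInf hbdd hne fun t ht => hss'.trans ht

lemma quantile_eqOn_compl_Ioo :
    EqOn (quantile μ) (({1} : Set ℝ).indicator fun _ => quantile μ 1) (Ioo 0 1)ᶜ := by
  intro s hs
  rcases lt_trichotomy s 1 with h | rfl | h
  · have h0 : s ≤ 0 := le_of_not_gt fun h0 => hs ⟨h0, h⟩
    simp [quantile_of_nonpos μ h0, h.ne]
  · simp
  · simp [quantile_of_one_lt μ h, h.ne']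

lemma measurable_quantile : Measurable (quantile μ) :=
  (monotoneOn_quantile μ).measurable_of_eqOn_compl measurableSet_Ioo
    (measurable_const.indicator (measurableSet_singleton 1)) (quantile_eqOn_compl_Ioo μ)

end ProbabilityTheory

namespace MeasureTheory.Measure

variable {α β γ : Type*} [MeasurableSpace α] [MeasurableSpace β] [MeasurableSpace γ]

lemma map_bind {m : Measure α} {f : α → Measure β} (hf : Measurable f) {g : β → γ}
    (hg : Measurable g) : (m.bind f).map g = m.bind fun a => (f a).map g := by
  ext s hs
  have hfg : Measurable fun a => (f a).map g := (measurable_map g hg).comp hf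
  rw [map_apply hg hs, bind_apply (hg hs) hf.aemeasurable, bind_apply hs hfg.aemeasurable]
  simp only [map_apply hg hs]

lemma map_eq_dirac_of_measure_preimage_singleton {μ : Measure α} [IsProbabilityMeasure μ]
    {f : α → β} (hf : Measurable f) {b : β} (hb : μ (f ⁻¹' {b}) = 1) : μ.map f = dirac b := by
  ext s hs
  rw [map_apply hf hs, dirac_apply' b hs]
  have hfull : ∀ t, b ∈ t → μ (f ⁻¹' t) = 1 := fun t hbt => le_antisymm prob_le_one
    (hb.ge.trans (measure_mono (preimage_mono (singleton_subset_iff.2 hbt))))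
  by_cases hbs : b ∈ s
  · rw [indicator_of_mem hbs, Pi.one_apply, hfull s hbs]
  · rw [indicator_of_notMem hbs, ← prob_compl_eq_one_iff (hf hs), ← preimage_compl]
    exact hfull sᶜ hbs

lemma map_bind_eq_self_of_fiber {ν : Measure β} {κ : β → Measure α} (hκ : Measurable κ)
    [∀ b, IsProbabilityMeasure (κ b)] {π : α → β} (hπ : Measurable π)
    (hfiber : ∀ b, κ b (π ⁻¹' {b}) = 1) : (ν.bind κ).map π = ν := by
  rw [map_bind hκ hπ]
  simp_rw [map_eq_dirac_of_measure_preimage_singleton hπ (hfiber _)]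
  exact bind_dirac

end MeasureTheory.Measure

/-- With the fiber-kernel construction (each `μ_ω` is a probability measure supported on
the fiber `π⁻¹{ω}` of the coordinatewise generalized-inverse map
`π = (…, F⁻¹, F⁻¹, …)`), the pushforward of the mixture measure `μ = ∫ μ_ω dν(ω)`
under `π` equals `ν`. -/
theorem mixture_pushforward_eq_base
    (ν : Measure (ℤ → ℝ)) [IsProbabilityMeasure ν]
    (F : ℝ → ℝ) (hF : ∀ t, F t = ((ν.map (fun x => x 0)) (Set.Iic t)).toReal)
    (Finv : ℝ → ℝ) (hFinv : ∀ s, Finv s = sInf {t : ℝ | s ≤ F t})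
    (π : (ℤ → ℝ) → (ℤ → ℝ)) (hπ : ∀ y n, π y n = Finv (y n))
    (κ : (ℤ → ℝ) → Measure (ℤ → ℝ))
    (hprob : ∀ ω, IsProbabilityMeasure (κ ω))
    (hmeas : ∀ s : Set (ℤ → ℝ), MeasurableSet s → Measurable (fun ω => κ ω s))
    (hfiber : ∀ ω, κ ω (π ⁻¹' {ω}) = 1) :
    (ν.bind κ).map π = ν := by
  have hF_cdf : F = cdf (ν.map (fun x => x 0)) := by
    have := Measure.isProbabilityMeasure_map (μ := ν) (measurable_pi_apply (0 : ℤ)).aemeasurable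
    ext t
    rw [hF, cdf_eq_real, measureReal_def]
  have hFinv_quantile : Finv = quantile (ν.map (fun x => x 0)) := by
    ext s
    rw [hFinv, hF_cdf, quantile]
  have hπ_meas : Measurable π := by
    refine measurable_pi_lambda _ fun n => ?_
    simp_rw [hπ, hFinv_quantile]
    exact (measurable_quantile _).comp (measurable_pi_apply n)
  exact Measure.map_bind_eq_self_of_fiber (Measure.measurable_of_measurable_coe κ hmeas)
    hπ_meas hfiber
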